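/- Let M ≥ 1, let 0 = x₀ < ⋯ < x_M = 1 be a partition of [0,1], T > 0, γ > 0, and let W : ℝ → ℝ be continuously differentiable. For each cell i ∈ {0,…,M−1} let ρᵢ, vᵢ, τᵢ, qᵢ : [0,T] × [xᵢ, xᵢ₊₁] → ℝ be twice continuously differentiable, with v₀(t,0) = v_{M−1}(t,1) = 0 and q₀(t,0) = q_{M−1}(t,1) = 0 for all t. Assume that for every t ∈ [0,T]: (1) Σᵢ ∫ (∂ₜρᵢ + ∂ₓ(ρᵢvᵢ)) τᵢ dx = Σⱼ [ρv]ⱼ {τ}ⱼ; (2) Σᵢ ∫ ( ρᵢ∂ₜvᵢ + ∂ₓ(ρᵢvᵢ²) − ∂ₓ(ρᵢvᵢ)vᵢ + ρᵢ∂ₓτᵢ − ½ρᵢ∂ₓ(vᵢ²) ) vᵢ dx = Σⱼ [τ]ⱼ {ρv}ⱼ; (3) Σᵢ ∫ ( τᵢ − W'(ρᵢ) + γ∂ₓqᵢ − ½vᵢ² ) ∂ₜρᵢ dx = γ Σⱼ [q]ⱼ {∂ₜρ}ⱼ; (4) Σᵢ ∫ ( ∂ₜqᵢ − ∂ₜ∂ₓρᵢ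 ) qᵢ dx = − Σⱼ [∂ₜρ]ⱼ {q}ⱼ; where all cell integrals are over [xᵢ, xᵢ₊₁] and all node sums over j = 1,…,M−1. Then the discrete energy t ↦ Σᵢ ∫_{xᵢ}^{xᵢ₊₁} [ W(ρᵢ) + ½ρᵢvᵢ² + (γ/2)qᵢ² ] dx is constant on [0,T]. -/

import Mathlib

/-!
On each cell the energy density `e = W(ρ) + ½ρv² + (γ/2)q²` satisfies the pointwise identity
`∂ₜe = R₁ τ + R₂ v - R₃ ∂ₜρ + γ R₄ q - ∂ₓ(ρvτ - γ q ∂ₜρ)`, where `R₁, …, R₄` are the residuals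
of the four equations of the scheme (this uses `∂ₜ∂ₓρ = ∂ₓ∂ₜρ`). Differentiating the energy under
the integral and integrating the flux term cellwise, `dE/dt` becomes the four tested residuals
minus the jumps of the flux `ρvτ - γ q ∂ₜρ` at the interior nodes; the flux vanishes at `x = 0`
and `x = 1` because `v` and `q` do. The numerical fluxes are chosen so that the discrete product
rule `[ab] = [a]{b} + {a}[b]` cancels these jumps node by node, hence `dE/dt = 0` on `[0, T]`.
-/

open Set MeasureTheory

/-- Time partial derivative of a function `f t x` of time and one space variable. -/
noncomputable def pt (f : ℝ → ℝ → ℝ) (t x : ℝ) : ℝ := deriv (fun s => f s x) t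

/-- Space partial derivative of a function `f t x` of time and one space variable. -/
noncomputable def px (f : ℝ → ℝ → ℝ) (t x : ℝ) : ℝ := deriv (fun y => f t y) x

open Function

section PartialDerivatives

variable {E : Type*} [NormedAddCommGroup E] [NormedSpace ℝ E]

theorem HasFDerivAt.hasDerivAt_prodMk_left {G : ℝ × ℝ → E} {G' : ℝ × ℝ →L[ℝ] E} {t y : ℝ}
    (hG : HasFDerivAt G G' (t, y)) : HasDerivAt (fun s => G (s, y)) (G' (1, 0)) t :=
  hG.comp_hasDerivAt t ((hasDerivAt_id t).prodMk (hasDerivAt_const t y))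

variable {f : ℝ → ℝ → ℝ}

theorem HasFDerivAt.hasDerivAt_prodMk_right {G : ℝ × ℝ → E} {G' : ℝ × ℝ →L[ℝ] E} {t y : ℝ}
    (hG : HasFDerivAt G G' (t, y)) : HasDerivAt (fun z => G (t, z)) (G' (0, 1)) y :=
  hG.comp_hasDerivAt y ((hasDerivAt_const y t).prodMk (hasDerivAt_id y))

theorem hasDerivAt_pt (hf : Differentiable ℝ (uncurry f)) (t y : ℝ) :
    HasDerivAt (fun s => f s y) (pt f t y) t :=
  ((hf.comp (differentiable_id.prodMk (differentiable_const y))) t).hasDerivAt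

theorem hasDerivAt_px (hf : Differentiable ℝ (uncurry f)) (t y : ℝ) :
    HasDerivAt (fun z => f t z) (px f t y) y :=
  ((hf.comp ((differentiable_const t).prodMk differentiable_id)) y).hasDerivAt

theorem pt_eq_fderiv (hf : Differentiable ℝ (uncurry f)) (t y : ℝ) :
    pt f t y = fderiv ℝ (uncurry f) (t, y) (1, 0) :=
  (hf (t, y)).hasFDerivAt.hasDerivAt_prodMk_left.deriv

theorem contDiff_pt {m n : WithTop ℕ∞} (hf : ContDiff ℝ m (uncurry f)) (hnm : n + 1 ≤ m) :
    ContDiff ℝ n (uncurry (pt f)) := by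
  have hf' : Differentiable ℝ (uncurry f) := hf.differentiable (lt_of_lt_of_le (by simp) hnm).ne'
  have : uncurry (pt f) = fun p => fderiv ℝ (uncurry f) p (1, 0) :=
    funext fun p => pt_eq_fderiv hf' p.1 p.2
  rw [this]
  exact (hf.fderiv_right hnm).clm_apply contDiff_const

-- `px f` is definitionally `pt (flip f)` with its two arguments swapped.
theorem contDiff_px {m n : WithTop ℕ∞} (hf : ContDiff ℝ m (uncurry f)) (hnm : n + 1 ≤ m) :
    ContDiff ℝ n (uncurry (px f)) :=
  (contDiff_pt (f := flip f) (hf.comp (contDiff_snd.prodMk contDiff_fst)) hnm).comp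
    (contDiff_snd.prodMk contDiff_fst)

theorem continuous_pt (hf : ContDiff ℝ 1 (uncurry f)) : Continuous (uncurry (pt f)) :=
  (contDiff_pt (n := 0) hf (by simp)).continuous

theorem continuous_px (hf : ContDiff ℝ 1 (uncurry f)) : Continuous (uncurry (px f)) :=
  (contDiff_px (n := 0) hf (by simp)).continuous

theorem pt_px_comm (hf : ContDiff ℝ 2 (uncurry f)) (t y : ℝ) :
    pt (px f) t y = px (pt f) t y := by
  set D := fderiv ℝ (uncurry f)
  have hf' : Differentiable ℝ (uncurry f) := hf.differentiable two_ne_zero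
  have hD : HasFDerivAt D (fderiv ℝ D (t, y)) (t, y) :=
    ((hf.fderiv_right (m := 1) (by norm_num)).differentiable one_ne_zero _).hasFDerivAt
  have hpx : px f = fun s z => D (s, z) (0, 1) :=
    funext₂ fun s z => (hf' (s, z)).hasFDerivAt.hasDerivAt_prodMk_right.deriv
  have hpt : pt f = fun s z => D (s, z) (1, 0) := funext₂ (pt_eq_fderiv hf')
  calc pt (px f) t y = fderiv ℝ D (t, y) (1, 0) (0, 1) := by
        simpa [hpx, pt] using (hD.hasDerivAt_prodMk_left.clm_apply (hasDerivAt_const t _)).deriv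
    _ = fderiv ℝ D (t, y) (0, 1) (1, 0) := hf.contDiffAt.isSymmSndFDerivAt (by simp) _ _
    _ = px (pt f) t y := by
        simpa [hpt, px] using
          (hD.hasDerivAt_prodMk_right.clm_apply (hasDerivAt_const y _)).deriv.symm

end PartialDerivatives

section Integrals

variable {f : ℝ → ℝ → ℝ}

theorem integral_px (hf : ContDiff ℝ 1 (uncurry f)) (t a b : ℝ) :
    ∫ y in a..b, px f t y = f t b - f t a :=
  intervalIntegral.integral_deriv_of_contDiffOn_uIcc
    (hf.comp (contDiff_const.prodMk contDiff_id)).contDiffOn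

theorem hasDerivAt_intervalIntegral_of_contDiff (hf : ContDiff ℝ 1 (uncurry f)) (a b t₀ : ℝ) :
    HasDerivAt (fun t => ∫ y in a..b, f t y) (∫ y in a..b, pt f t₀ y) t₀ := by
  have hf₀ : Continuous (uncurry f) := hf.continuous
  have hpt : Continuous (uncurry (pt f)) := continuous_pt hf
  obtain ⟨C, hC⟩ := ((isCompact_closedBall t₀ 1).prod isCompact_uIcc).exists_bound_of_continuousOn
    hpt.continuousOn
  refine (intervalIntegral.hasDerivAt_integral_of_dominated_loc_of_deriv_le (bound := fun _ => C)
    (Metric.ball_mem_nhds t₀ one_pos) (.of_forall fun t => ?_) ?_ ?_ ?_ intervalIntegrable_const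
    (.of_forall fun y _ t _ => hasDerivAt_pt (hf.differentiable one_ne_zero) t y)).2
  · exact (show Continuous (f t) by fun_prop).aestronglyMeasurable
  · exact (show Continuous (f t₀) by fun_prop).intervalIntegrable _ _
  · exact (show Continuous (pt f t₀) by fun_prop).aestronglyMeasurable
  · exact .of_forall fun y hy t ht =>
      hC (t, y) ⟨Metric.ball_subset_closedBall ht, uIoc_subset_uIcc hy⟩

end Integrals

theorem Finset.sum_range_sub_eq_sub_add_sum_Ico {G : Type*} [AddCommGroup G] (Φ : ℕ → ℕ → G)
    {M : ℕ} (hM : 1 ≤ M) :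
    ∑ i ∈ range M, (Φ i (i + 1) - Φ i i)
      = Φ (M - 1) M - Φ 0 0 + ∑ j ∈ Ico 1 M, (Φ (j - 1) j - Φ j j) := by
  obtain ⟨n, rfl⟩ := Nat.exists_eq_add_of_le' hM
  rw [sum_Ico_eq_sum_range, sum_sub_distrib, sum_sub_distrib, sum_range_succ, sum_range_succ']
  simp only [add_tsub_cancel_right, add_comm 1]
  abel

noncomputable section EulerKorteweg

variable (W : ℝ → ℝ) (γ : ℝ) (ρ v τ q : ℝ → ℝ → ℝ)

def energyDensity (t y : ℝ) : ℝ :=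
  W (ρ t y) + (1/2) * ρ t y * (v t y) ^ 2 + (γ/2) * (q t y) ^ 2

-- Reducible, so that `rw` matches them against the integrands spelled out in the main theorem.
abbrev massResidual (t y : ℝ) : ℝ :=
  pt ρ t y + px (fun s z => ρ s z * v s z) t y

abbrev momentumResidual (t y : ℝ) : ℝ :=
  ρ t y * pt v t y + px (fun s z => ρ s z * (v s z) ^ 2) t y
    - px (fun s z => ρ s z * v s z) t y * v t y + ρ t y * px τ t y
    - (1/2) * ρ t y * px (fun s z => (v s z) ^ 2) t y

abbrev chemicalPotentialResidual (t y : ℝ) : ℝ :=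
  τ t y - deriv W (ρ t y) + γ * px q t y - (1/2) * (v t y) ^ 2

abbrev gradientResidual (t y : ℝ) : ℝ :=
  pt q t y - pt (px ρ) t y

def energyFlux (t y : ℝ) : ℝ :=
  ρ t y * v t y * τ t y - γ * (q t y * pt ρ t y)

variable {W γ ρ v τ q}

theorem pt_energyDensity (hW : Differentiable ℝ W) (hρ : ContDiff ℝ 2 (uncurry ρ))
    (hv : Differentiable ℝ (uncurry v)) (hτ : Differentiable ℝ (uncurry τ))
    (hq : Differentiable ℝ (uncurry q)) (t y : ℝ) :
    pt (energyDensity W γ ρ v q) t y =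
      massResidual ρ v t y * τ t y + momentumResidual ρ v τ t y * v t y
        - chemicalPotentialResidual W γ ρ v τ q t y * pt ρ t y
        + γ * (gradientResidual ρ q t y * q t y) - px (energyFlux γ ρ v τ q) t y := by
  have hρ' : Differentiable ℝ (uncurry ρ) := hρ.differentiable two_ne_zero
  have Tρ := hasDerivAt_pt hρ' t y
  have Tv := hasDerivAt_pt hv t y
  have Tq := hasDerivAt_pt hq t y
  have Xρ := hasDerivAt_px hρ' t y
  have Xv := hasDerivAt_px hv t y
  have Xτ := hasDerivAt_px hτ t y
  have Xq := hasDerivAt_px hq t y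
  have XTρ := hasDerivAt_px ((contDiff_pt hρ (n := 1) (by norm_num)).differentiable one_ne_zero) t y
  have hE : pt (energyDensity W γ ρ v q) t y = _ :=
    ((((hW _).hasDerivAt.comp t Tρ).fun_add ((Tρ.const_mul _).fun_mul (Tv.fun_pow 2))).fun_add
      ((Tq.fun_pow 2).const_mul _)).deriv
  have hF : px (energyFlux γ ρ v τ q) t y = _ :=
    (((Xρ.fun_mul Xv).fun_mul Xτ).fun_sub ((Xq.fun_mul XTρ).const_mul γ)).deriv
  have hρv : px (fun s z => ρ s z * v s z) t y = _ := (Xρ.fun_mul Xv).deriv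
  have hρv2 : px (fun s z => ρ s z * v s z ^ 2) t y = _ := (Xρ.fun_mul (Xv.fun_pow 2)).deriv
  have hv2 : px (fun s z => v s z ^ 2) t y = _ := (Xv.fun_pow 2).deriv
  rw [hE, hF, massResidual, momentumResidual, hρv, hρv2, hv2, gradientResidual, pt_px_comm hρ]
  push_cast
  ring

theorem contDiff_energyFlux (hρ : ContDiff ℝ 2 (uncurry ρ)) (hv : ContDiff ℝ 1 (uncurry v))
    (hτ : ContDiff ℝ 1 (uncurry τ)) (hq : ContDiff ℝ 1 (uncurry q)) :
    ContDiff ℝ 1 (uncurry (energyFlux γ ρ v τ q)) :=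
  (((hρ.of_le one_le_two).mul hv).mul hτ).sub (contDiff_const.mul (hq.mul (contDiff_pt hρ le_rfl)))

theorem contDiff_energyDensity {n : WithTop ℕ∞} (hW : ContDiff ℝ n W)
    (hρ : ContDiff ℝ n (uncurry ρ)) (hv : ContDiff ℝ n (uncurry v))
    (hq : ContDiff ℝ n (uncurry q)) :
    ContDiff ℝ n (uncurry (energyDensity W γ ρ v q)) :=
  ((hW.comp hρ).add ((contDiff_const.mul hρ).mul (hv.pow 2))).add (contDiff_const.mul (hq.pow 2))

theorem energyFlux_eq_zero {t y : ℝ} (hv : v t y = 0) (hq : q t y = 0) :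
    energyFlux γ ρ v τ q t y = 0 := by
  simp [energyFlux, hv, hq]

theorem integral_pt_energyDensity (hW : ContDiff ℝ 1 W) (hρ : ContDiff ℝ 2 (uncurry ρ))
    (hv : ContDiff ℝ 1 (uncurry v)) (hτ : ContDiff ℝ 1 (uncurry τ))
    (hq : ContDiff ℝ 1 (uncurry q)) (t a b : ℝ) :
    ∫ y in a..b, pt (energyDensity W γ ρ v q) t y =
      (∫ y in a..b, massResidual ρ v t y * τ t y)
        + (∫ y in a..b, momentumResidual ρ v τ t y * v t y)
        - (∫ y in a..b, chemicalPotentialResidual W γ ρ v τ q t y * pt ρ t y)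
        + γ * (∫ y in a..b, gradientResidual ρ q t y * q t y)
        - (energyFlux γ ρ v τ q t b - energyFlux γ ρ v τ q t a) := by
  have hρ1 : ContDiff ℝ 1 (uncurry ρ) := hρ.of_le one_le_two
  have := hW.continuous_deriv le_rfl
  have := hρ1.continuous; have := hv.continuous; have := hτ.continuous; have := hq.continuous
  have := continuous_pt hρ1; have := continuous_pt hv; have := continuous_pt hq
  have := continuous_px hτ; have := continuous_px hq
  have := continuous_px (f := fun s z => ρ s z * v s z) (hρ1.mul hv)
  have := continuous_px (f := fun s z => ρ s z * v s z ^ 2) (hρ1.mul (hv.pow 2))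
  have := continuous_px (f := fun s z => v s z ^ 2) (hv.pow 2)
  have := continuous_pt (contDiff_px hρ le_rfl)
  rw [← integral_px (contDiff_energyFlux hρ hv hτ hq), intervalIntegral.integral_congr fun y _ =>
    pt_energyDensity (hW.differentiable one_ne_zero) hρ (hv.differentiable one_ne_zero)
      (hτ.differentiable one_ne_zero) (hq.differentiable one_ne_zero) t y]
  have := continuous_px (contDiff_energyFlux (γ := γ) hρ hv hτ hq)
  rw [intervalIntegral.integral_sub, intervalIntegral.integral_add, intervalIntegral.integral_sub,
    intervalIntegral.integral_add, intervalIntegral.integral_const_mul]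
  all_goals exact Continuous.intervalIntegrable (by fun_prop) _ _

end EulerKorteweg

theorem dg_semidiscrete_energy_conservation_general
    (M : ℕ) (hM : 1 ≤ M) (xp : ℕ → ℝ)
    (hx0 : xp 0 = 0) (hxM : xp M = 1)
    (T γ : ℝ)
    (W : ℝ → ℝ) (hW : ContDiff ℝ 1 W)
    (ρ v τ q : ℕ → ℝ → ℝ → ℝ)  -- cell index, time, position
    (hρ : ∀ i < M, ContDiff ℝ 2 (fun z : ℝ × ℝ => ρ i z.1 z.2))
    (hv : ∀ i < M, ContDiff ℝ 2 (fun z : ℝ × ℝ => v i z.1 z.2))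
    (hτ : ∀ i < M, ContDiff ℝ 2 (fun z : ℝ × ℝ => τ i z.1 z.2))
    (hq : ∀ i < M, ContDiff ℝ 2 (fun z : ℝ × ℝ => q i z.1 z.2))
    -- boundary conditions
    (hbv : ∀ t ∈ Icc (0:ℝ) T, v 0 t 0 = 0 ∧ v (M - 1) t 1 = 0)
    (hbq : ∀ t ∈ Icc (0:ℝ) T, q 0 t 0 = 0 ∧ q (M - 1) t 1 = 0)
    -- (1) mass equation tested with τ
    (h1 : ∀ t ∈ Icc (0:ℝ) T,
      ∑ i ∈ Finset.range M, ∫ y in xp i..xp (i + 1),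
          ((pt (ρ i) t y + px (fun s z => ρ i s z * v i s z) t y) * τ i t y)
        = ∑ j ∈ Finset.Ico 1 M,
            (ρ (j - 1) t (xp j) * v (j - 1) t (xp j)
              - ρ j t (xp j) * v j t (xp j))
            * ((τ (j - 1) t (xp j) + τ j t (xp j)) / 2))
    -- (2) momentum equation tested with v
    (h2 : ∀ t ∈ Icc (0:ℝ) T,
      ∑ i ∈ Finset.range M, ∫ y in xp i..xp (i + 1),
          ((ρ i t y * pt (v i) t y
              + px (fun s z => ρ i s z * (v i s z) ^ 2) t y
              - px (fun s z => ρ i s z * v i s z) t y * v i t y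
              + ρ i t y * px (τ i) t y
              - (1/2) * ρ i t y * px (fun s z => (v i s z) ^ 2) t y)
            * v i t y)
        = ∑ j ∈ Finset.Ico 1 M,
            (τ (j - 1) t (xp j) - τ j t (xp j))
            * ((ρ (j - 1) t (xp j) * v (j - 1) t (xp j)
                + ρ j t (xp j) * v j t (xp j)) / 2))
    -- (3) chemical-potential equation tested with ∂ₜρ
    (h3 : ∀ t ∈ Icc (0:ℝ) T,
      ∑ i ∈ Finset.range M, ∫ y in xp i..xp (i + 1),
          ((τ i t y - deriv W (ρ i t y) + γ * px (q i) t y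
              - (1/2) * (v i t y) ^ 2) * pt (ρ i) t y)
        = γ * ∑ j ∈ Finset.Ico 1 M,
            (q (j - 1) t (xp j) - q j t (xp j))
            * ((pt (ρ (j - 1)) t (xp j) + pt (ρ j) t (xp j)) / 2))
    -- (4) time-differentiated gradient equation tested with q
    (h4 : ∀ t ∈ Icc (0:ℝ) T,
      ∑ i ∈ Finset.range M, ∫ y in xp i..xp (i + 1),
          ((pt (q i) t y - pt (px (ρ i)) t y) * q i t y)
        = -∑ j ∈ Finset.Ico 1 M,
            (pt (ρ (j - 1)) t (xp j) - pt (ρ j) t (xp j))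
            * ((q (j - 1) t (xp j) + q j t (xp j)) / 2)) :
    ∀ t ∈ Icc (0:ℝ) T,
      (∑ i ∈ Finset.range M, ∫ y in xp i..xp (i + 1),
          (W (ρ i t y) + (1/2) * ρ i t y * (v i t y) ^ 2
            + (γ/2) * (q i t y) ^ 2))
        = ∑ i ∈ Finset.range M, ∫ y in xp i..xp (i + 1),
            (W (ρ i 0 y) + (1/2) * ρ i 0 y * (v i 0 y) ^ 2
              + (γ/2) * (q i 0 y) ^ 2) := by
  have hρ2 : ∀ i ∈ Finset.range M, ContDiff ℝ 2 (uncurry (ρ i)) :=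
    fun i hi => hρ i (Finset.mem_range.1 hi)
  have hv1 : ∀ i ∈ Finset.range M, ContDiff ℝ 1 (uncurry (v i)) :=
    fun i hi => (hv i (Finset.mem_range.1 hi)).of_le one_le_two
  have hτ1 : ∀ i ∈ Finset.range M, ContDiff ℝ 1 (uncurry (τ i)) :=
    fun i hi => (hτ i (Finset.mem_range.1 hi)).of_le one_le_two
  have hq1 : ∀ i ∈ Finset.range M, ContDiff ℝ 1 (uncurry (q i)) :=
    fun i hi => (hq i (Finset.mem_range.1 hi)).of_le one_le_two
  have hE (t : ℝ) : HasDerivAt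
      (fun t => ∑ i ∈ Finset.range M, ∫ y in xp i..xp (i + 1),
        energyDensity W γ (ρ i) (v i) (q i) t y)
      (∑ i ∈ Finset.range M, ∫ y in xp i..xp (i + 1),
        pt (energyDensity W γ (ρ i) (v i) (q i)) t y) t :=
    HasDerivAt.fun_sum fun i hi => hasDerivAt_intervalIntegral_of_contDiff
      (contDiff_energyDensity hW ((hρ2 i hi).of_le one_le_two) (hv1 i hi) (hq1 i hi)) _ _ t
  have hE' : ∀ t ∈ Icc 0 T, ∑ i ∈ Finset.range M,
      ∫ y in xp i..xp (i + 1), pt (energyDensity W γ (ρ i) (v i) (q i)) t y = 0 := by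
    intro t ht
    rw [Finset.sum_congr rfl fun i hi =>
      integral_pt_energyDensity hW (hρ2 i hi) (hv1 i hi) (hτ1 i hi) (hq1 i hi) t _ _]
    simp only [Finset.sum_add_distrib, Finset.sum_sub_distrib, ← Finset.mul_sum]
    rw [h1 t ht, h2 t ht, h3 t ht, h4 t ht, ← Finset.sum_sub_distrib,
      Finset.sum_range_sub_eq_sub_add_sum_Ico
        (fun i k => energyFlux γ (ρ i) (v i) (τ i) (q i) t (xp k)) hM,
      hxM, hx0, energyFlux_eq_zero (hbv t ht).2 (hbq t ht).2,
      energyFlux_eq_zero (hbv t ht).1 (hbq t ht).1]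
    simp only [sub_zero, zero_add, Finset.mul_sum, ← Finset.sum_neg_distrib,
      ← Finset.sum_add_distrib, ← Finset.sum_sub_distrib]
    exact Finset.sum_eq_zero fun j _ => by unfold energyFlux; ring
  exact constant_of_has_deriv_right_zero (fun s _ => (hE s).continuousAt.continuousWithinAt)
    fun s hs => (hE s).hasDerivWithinAt.congr_deriv (hE' s (Ico_subset_Icc_self hs))

/-- Energy conservation for the spatially semidiscrete DG scheme for the
Euler–Korteweg system (`μ = 0`) on a partition `0 = x₀ < ⋯ < x_M = 1` with the
energy-consistent fluxes, the four DG equations being tested respectively with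
`τ_h`, `v_h`, `∂ₜρ_h` and (after time differentiation) `q_h`: the discrete
energy `Σᵢ ∫ W(ρᵢ) + ½ρᵢvᵢ² + (γ/2)qᵢ²` is constant on `[0,T]`. -/
theorem dg_semidiscrete_energy_conservation
    (M : ℕ) (hM : 1 ≤ M) (xp : ℕ → ℝ)
    (hx0 : xp 0 = 0) (hxM : xp M = 1)
    (hx : ∀ i < M, xp i < xp (i + 1))
    (T γ : ℝ) (hT : 0 < T) (hγ : 0 < γ)
    (W : ℝ → ℝ) (hW : ContDiff ℝ 1 W)
    (ρ v τ q : ℕ → ℝ → ℝ → ℝ)  -- cell index, time, position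
    (hρ : ∀ i < M, ContDiff ℝ 2 (fun z : ℝ × ℝ => ρ i z.1 z.2))
    (hv : ∀ i < M, ContDiff ℝ 2 (fun z : ℝ × ℝ => v i z.1 z.2))
    (hτ : ∀ i < M, ContDiff ℝ 2 (fun z : ℝ × ℝ => τ i z.1 z.2))
    (hq : ∀ i < M, ContDiff ℝ 2 (fun z : ℝ × ℝ => q i z.1 z.2))
    -- boundary conditions
    (hbv : ∀ t ∈ Icc (0:ℝ) T, v 0 t 0 = 0 ∧ v (M - 1) t 1 = 0)
    (hbq : ∀ t ∈ Icc (0:ℝ) T, q 0 t 0 = 0 ∧ q (M - 1) t 1 = 0)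
    -- (1) mass equation tested with τ
    (h1 : ∀ t ∈ Icc (0:ℝ) T,
      ∑ i ∈ Finset.range M, ∫ y in xp i..xp (i + 1),
          ((pt (ρ i) t y + px (fun s z => ρ i s z * v i s z) t y) * τ i t y)
        = ∑ j ∈ Finset.Ico 1 M,
            (ρ (j - 1) t (xp j) * v (j - 1) t (xp j)
              - ρ j t (xp j) * v j t (xp j))
            * ((τ (j - 1) t (xp j) + τ j t (xp j)) / 2))
    -- (2) momentum equation tested with v
    (h2 : ∀ t ∈ Icc (0:ℝ) T,
      ∑ i ∈ Finset.range M, ∫ y in xp i..xp (i + 1),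
          ((ρ i t y * pt (v i) t y
              + px (fun s z => ρ i s z * (v i s z) ^ 2) t y
              - px (fun s z => ρ i s z * v i s z) t y * v i t y
              + ρ i t y * px (τ i) t y
              - (1/2) * ρ i t y * px (fun s z => (v i s z) ^ 2) t y)
            * v i t y)
        = ∑ j ∈ Finset.Ico 1 M,
            (τ (j - 1) t (xp j) - τ j t (xp j))
            * ((ρ (j - 1) t (xp j) * v (j - 1) t (xp j)
                + ρ j t (xp j) * v j t (xp j)) / 2))
    -- (3) chemical-potential equation tested with ∂ₜρ
    (h3 : ∀ t ∈ Icc (0:ℝ) T,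
      ∑ i ∈ Finset.range M, ∫ y in xp i..xp (i + 1),
          ((τ i t y - deriv W (ρ i t y) + γ * px (q i) t y
              - (1/2) * (v i t y) ^ 2) * pt (ρ i) t y)
        = γ * ∑ j ∈ Finset.Ico 1 M,
            (q (j - 1) t (xp j) - q j t (xp j))
            * ((pt (ρ (j - 1)) t (xp j) + pt (ρ j) t (xp j)) / 2))
    -- (4) time-differentiated gradient equation tested with q
    (h4 : ∀ t ∈ Icc (0:ℝ) T,
      ∑ i ∈ Finset.range M, ∫ y in xp i..xp (i + 1),
          ((pt (q i) t y - pt (px (ρ i)) t y) * q i t y)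
        = -∑ j ∈ Finset.Ico 1 M,
            (pt (ρ (j - 1)) t (xp j) - pt (ρ j) t (xp j))
            * ((q (j - 1) t (xp j) + q j t (xp j)) / 2)) :
    ∀ t ∈ Icc (0:ℝ) T,
      (∑ i ∈ Finset.range M, ∫ y in xp i..xp (i + 1),
          (W (ρ i t y) + (1/2) * ρ i t y * (v i t y) ^ 2
            + (γ/2) * (q i t y) ^ 2))
        = ∑ i ∈ Finset.range M, ∫ y in xp i..xp (i + 1),
            (W (ρ i 0 y) + (1/2) * ρ i 0 y * (v i 0 y) ^ 2
              + (γ/2) * (q i 0 y) ^ 2) :=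
  dg_semidiscrete_energy_conservation_general M hM xp hx0 hxM T γ W hW ρ v τ q hρ hv hτ hq hbv hbq
    h1 h2 h3 h4
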